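/- Amplitude bound for the reduced Gardner–Ostrovsky equation: let c > 0, σ ∈ ℝ, α > 0, and B ∈ ℝ. Let φ : ℝ → ℝ be continuous, 2π-periodic, with zero mean, satisfying −c·φ(x) + (σ/2)·φ(x)² + (α/3)·φ(x)³ = −(K∗φ)(x) + B for all x ∈ ℝ. Then sup_{x∈ℝ} φ(x) − inf_{x∈ℝ} φ(x) ≤ 2·√(σ²/(4α²) + c/α). -/

import Mathlib

open Real MeasureTheory Filter

/-- The 2π-periodic kernel of `D⁻²`, equal to `(1/(4π))(|x|−π)² − π/12` on `[−π,π]`. -/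
noncomputable def Kper (x : ℝ) : ℝ :=
  (1 / (4 * π)) * (|x - 2 * π * ((round (x / (2 * π)) : ℤ) : ℝ)| - π) ^ 2 - π / 12

noncomputable def Kconv (φ : ℝ → ℝ) (x : ℝ) : ℝ :=
  ∫ y in (-π)..π, Kper (x - y) * φ y

/-!
Write `Ψ = K∗φ` and `F t = -c t + (σ/2) t² + (α/3) t³`, so that the equation reads
`F (φ x) = B - Ψ x`. Since `K` is the Green's function of `-d²/dx²` on zero-mean periodic
functions, `Ψ'' = -φ`. The cubic `F` is strictly increasing above its nonnegative critical point
`p = √(σ²/(4α²) + c/α) - σ/(2α)`.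

If `φ x > p`, then, because the zero-mean `φ` also takes values `≤ 0 ≤ p`, there is an interval
`[a, b] ∋ x` with `φ a = φ b = p` and `φ ≥ p ≥ 0` on it. There `Ψ` is concave, so
`F (φ x) = B - Ψ x ≤ B - min (Ψ a) (Ψ b) = F p`, contradicting monotonicity. Hence `φ ≤ p`.
Since `-φ` solves the equation with `(-σ, -B)`, the same bound for `-φ` gives the lower bound.
-/

open Set

lemma Kper_periodic : Function.Periodic Kper (2 * π) := by
  intro x
  have h : (x + 2 * π) / (2 * π) = x / (2 * π) + 1 := by field_simp
  rw [Kper, Kper, h, round_add_one]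
  push_cast
  ring_nf

lemma Kper_eq_of_mem_Icc {u : ℝ} (hu : u ∈ Icc (-π) π) :
    Kper u = (1 / (4 * π)) * (|u| - π) ^ 2 - π / 12 := by
  have hπ := pi_pos
  rcases hu.2.eq_or_lt with rfl | hlt
  · have h : round (π / (2 * π)) = 1 := by
      rw [show π / (2 * π) = 1 / 2 by field_simp]
      norm_num [round_eq]
    rw [Kper, h, Int.cast_one, mul_one, show π - 2 * π = -π by ring, abs_neg]
  · have h : round (u / (2 * π)) = 0 := by
      rw [round_eq_zero_iff, mem_Ico, le_div_iff₀ (by positivity), div_lt_iff₀ (by positivity)]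
      constructor <;> linarith [hu.1]
    rw [Kper, h, Int.cast_zero, mul_zero, sub_zero]

section Window

variable {φ : ℝ → ℝ} (hφ : Continuous φ)
include hφ

theorem integral_add_sub_mul_eq (a b x h : ℝ) :
    ∫ y in a..b, (x + h - y) * φ y = x * (∫ y in a..b, φ y) + ∫ y in a..b, (h - y) * φ y := by
  rw [← intervalIntegral.integral_const_mul,
    ← intervalIntegral.integral_add ((hφ.const_mul x).intervalIntegrable _ _)
      ((by fun_prop : Continuous fun y => (h - y) * φ y).intervalIntegrable _ _)]
  congr 1 with y
  ring

theorem integral_add_sub_sq_mul_eq (a b x h : ℝ) :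
    ∫ y in a..b, (x + h - y) ^ 2 * φ y = x ^ 2 * (∫ y in a..b, φ y)
      + 2 * x * (∫ y in a..b, (h - y) * φ y) + ∫ y in a..b, (h - y) ^ 2 * φ y := by
  have hψ₁ : Continuous fun y => (h - y) * φ y := by fun_prop
  have hψ₂ : Continuous fun y => (h - y) ^ 2 * φ y := by fun_prop
  rw [← intervalIntegral.integral_const_mul, ← intervalIntegral.integral_const_mul,
    ← intervalIntegral.integral_add ((hφ.const_mul _).intervalIntegrable _ _)
      ((hψ₁.const_mul _).intervalIntegrable _ _),
    ← intervalIntegral.integral_add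
      (((hφ.const_mul _).intervalIntegrable _ _).add ((hψ₁.const_mul _).intervalIntegrable _ _))
      (hψ₂.intervalIntegrable _ _)]
  congr 1 with y
  ring

variable (d e : ℝ)

theorem hasDerivAt_integral_window (x : ℝ) :
    HasDerivAt (fun x => ∫ y in (x + d)..(x + e), φ y) (φ (x + e) - φ (x + d)) x := by
  have hsub : (fun x => ∫ y in (x + d)..(x + e), φ y)
      = fun x => (∫ y in (0 : ℝ)..(x + e), φ y) - ∫ y in (0 : ℝ)..(x + d), φ y := by
    funext x
    rw [intervalIntegral.integral_interval_sub_left (hφ.intervalIntegrable _ _)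
      (hφ.intervalIntegrable _ _)]
  have hF : ∀ c, HasDerivAt (fun x => ∫ y in (0 : ℝ)..(x + c), φ y) (φ (x + c)) x := fun c =>
    (hφ.integral_hasStrictDerivAt 0 (x + c)).hasDerivAt.comp_add_const x c
  rw [hsub]
  exact (hF e).sub (hF d)

theorem hasDerivAt_integral_window_linear (h x : ℝ) :
    HasDerivAt (fun x => ∫ y in (x + d)..(x + e), (x + h - y) * φ y)
      ((h - e) * φ (x + e) - (h - d) * φ (x + d) + ∫ y in (x + d)..(x + e), φ y) x := by
  have hψ : Continuous fun y => (h - y) * φ y := by fun_prop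
  rw [funext fun x => integral_add_sub_mul_eq hφ _ _ x h]
  exact ((hasDerivAt_id' x).mul (hasDerivAt_integral_window hφ d e x)).add
    (hasDerivAt_integral_window hψ d e x) |>.congr_deriv (by ring)

theorem hasDerivAt_integral_window_sq (h x : ℝ) :
    HasDerivAt (fun x => ∫ y in (x + d)..(x + e), (x + h - y) ^ 2 * φ y)
      ((h - e) ^ 2 * φ (x + e) - (h - d) ^ 2 * φ (x + d)
        + 2 * ∫ y in (x + d)..(x + e), (x + h - y) * φ y) x := by
  have hψ₁ : Continuous fun y => (h - y) * φ y := by fun_prop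
  have hψ₂ : Continuous fun y => (h - y) ^ 2 * φ y := by fun_prop
  rw [funext fun x => integral_add_sub_sq_mul_eq hφ _ _ x h, integral_add_sub_mul_eq hφ]
  exact (((hasDerivAt_pow 2 x).mul (hasDerivAt_integral_window hφ d e x)).add
    (((hasDerivAt_id' x).const_mul 2).mul (hasDerivAt_integral_window hψ₁ d e x))).add
    (hasDerivAt_integral_window hψ₂ d e x) |>.congr_deriv (by ring)

end Window

section Convolution

variable {φ : ℝ → ℝ} (hφc : Continuous φ) (hφp : Function.Periodic φ (2 * π))
  (hφ0 : ∫ y in (-π)..π, φ y = 0)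

include hφp hφ0 in
theorem integral_window_eq_zero (x : ℝ) : ∫ y in (x - π)..(x + π), φ y = 0 := by
  have h := hφp.intervalIntegral_add_eq (x - π) (-π)
  rw [show x - π + 2 * π = x + π by ring, show -π + 2 * π = π by ring] at h
  rw [h, hφ0]

include hφc hφp hφ0 in
theorem Kconv_eq (x : ℝ) : Kconv φ x = (1 / (4 * π)) *
    ((∫ y in (x - π)..x, (x - π - y) ^ 2 * φ y) + ∫ y in x..(x + π), (x + π - y) ^ 2 * φ y) := by
  have hπ := pi_pos
  have hper : Function.Periodic (fun y => Kper (x - y) * φ y) (2 * π) := fun y => by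
    simp only [hφp y, show x - (y + 2 * π) = x - y - 2 * π by ring, Kper_periodic.sub_eq]
  have hshift : Kconv φ x = ∫ y in (x - π)..(x + π), Kper (x - y) * φ y := by
    have h := hper.intervalIntegral_add_eq (-π) (x - π)
    rwa [show -π + 2 * π = π by ring, show x - π + 2 * π = x + π by ring] at h
  have hK : ∀ y ∈ uIcc (x - π) (x + π),
      Kper (x - y) * φ y = (1 / (4 * π)) * ((|x - y| - π) ^ 2 * φ y) - π / 12 * φ y := by
    intro y hy
    rw [uIcc_of_le (by linarith)] at hy
    rw [Kper_eq_of_mem_Icc ⟨by linarith [hy.2], by linarith [hy.1]⟩]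
    ring
  have hk : Continuous fun y => (|x - y| - π) ^ 2 * φ y := by fun_prop
  rw [hshift, intervalIntegral.integral_congr hK,
    intervalIntegral.integral_sub ((hk.const_mul _).intervalIntegrable _ _)
      ((hφc.const_mul _).intervalIntegrable _ _),
    intervalIntegral.integral_const_mul, intervalIntegral.integral_const_mul,
    integral_window_eq_zero hφp hφ0, mul_zero, sub_zero,
    ← intervalIntegral.integral_add_adjacent_intervals (hk.intervalIntegrable _ x)
      (hk.intervalIntegrable x _)]
  congr 2 <;> refine intervalIntegral.integral_congr fun y hy => ?_ <;>
    rw [uIcc_of_le (by linarith)] at hy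
  · rw [abs_of_nonneg (by linarith [hy.2])]; ring
  · rw [abs_of_nonpos (by linarith [hy.1])]; ring

noncomputable def KconvDeriv (φ : ℝ → ℝ) (x : ℝ) : ℝ :=
  (1 / (2 * π)) * ((∫ y in (x - π)..x, (x - π - y) * φ y) + ∫ y in x..(x + π), (x + π - y) * φ y)

include hφc hφp hφ0 in
theorem hasDerivAt_Kconv (x : ℝ) : HasDerivAt (Kconv φ) (KconvDeriv φ x) x := by
  have h₁ := hasDerivAt_integral_window_sq hφc (-π) 0 (-π) x
  have h₂ := hasDerivAt_integral_window_sq hφc 0 π π x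
  simp only [add_zero, ← sub_eq_add_neg] at h₁ h₂
  rw [funext (Kconv_eq hφc hφp hφ0)]
  -- the boundary terms `± π² φ x` of the two halves cancel
  exact ((h₁.add h₂).const_mul (1 / (4 * π))).congr_deriv (by rw [KconvDeriv]; field_simp; ring)

include hφc hφp hφ0 in
theorem hasDerivAt_KconvDeriv (x : ℝ) : HasDerivAt (KconvDeriv φ) (-φ x) x := by
  have h₁ := hasDerivAt_integral_window_linear hφc (-π) 0 (-π) x
  have h₂ := hasDerivAt_integral_window_linear hφc 0 π π x
  simp only [add_zero, ← sub_eq_add_neg] at h₁ h₂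
  have hsplit := intervalIntegral.integral_add_adjacent_intervals
    (hφc.intervalIntegrable (μ := volume) (x - π) x) (hφc.intervalIntegrable x (x + π))
  rw [integral_window_eq_zero hφp hφ0] at hsplit
  -- boundary terms give `-2π φ x`; the remaining integral of `φ` over the window vanishes
  exact ((h₁.add h₂).const_mul (1 / (2 * π))).congr_deriv (by field_simp; linear_combination hsplit)

include hφc hφp hφ0 in
theorem concaveOn_Kconv {a b : ℝ} (hφ : ∀ t ∈ Icc a b, 0 ≤ φ t) :
    ConcaveOn ℝ (Icc a b) (Kconv φ) :=
  concaveOn_of_hasDerivWithinAt2_nonpos (convex_Icc a b)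
    (fun t _ => (hasDerivAt_Kconv hφc hφp hφ0 t).continuousAt.continuousWithinAt)
    (fun t _ => (hasDerivAt_Kconv hφc hφp hφ0 t).hasDerivWithinAt)
    (fun t _ => (hasDerivAt_KconvDeriv hφc hφp hφ0 t).hasDerivWithinAt)
    (fun t ht => neg_nonpos.2 (hφ t (interior_subset ht)))

end Convolution

theorem Kconv_neg (φ : ℝ → ℝ) (x : ℝ) : Kconv (-φ) x = -Kconv φ x := by
  simp only [Kconv, Pi.neg_apply, mul_neg, intervalIntegral.integral_neg]

section Crossing

variable {f : ℝ → ℝ} (hf : Continuous f) {s : ℝ}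
include hf

theorem exists_left_crossing {z x : ℝ} (hzx : z ≤ x) (hz : f z ≤ s) (hx : s ≤ f x) :
    ∃ a ∈ Icc z x, f a = s ∧ ∀ t ∈ Icc a x, s ≤ f t := by
  set S := Icc z x ∩ {t | f t = s}
  have hS : S.Nonempty := intermediate_value_Icc hzx hf.continuousOn ⟨hz, hx⟩
  have hSbdd : BddAbove S := ⟨x, fun t ht => ht.1.2⟩
  obtain ⟨ha, hfa⟩ : sSup S ∈ S :=
    (isClosed_Icc.inter (isClosed_eq hf continuous_const)).csSup_mem hS hSbdd
  refine ⟨sSup S, ha, hfa, fun t ht => le_of_not_gt fun hft => ?_⟩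
  obtain ⟨u, hu, hfu⟩ := intermediate_value_Icc ht.2 hf.continuousOn ⟨hft.le, hx⟩
  have hut : u ≤ sSup S := le_csSup hSbdd ⟨⟨ha.1.trans (ht.1.trans hu.1), hu.2⟩, hfu⟩
  have : t = sSup S := le_antisymm (hu.1.trans hut) ht.1
  exact hft.ne (this ▸ hfa)

theorem exists_right_crossing {z x : ℝ} (hxz : x ≤ z) (hz : f z ≤ s) (hx : s ≤ f x) :
    ∃ b ∈ Icc x z, f b = s ∧ ∀ t ∈ Icc x b, s ≤ f t := by
  obtain ⟨a, ha, hfa, hge⟩ := exists_left_crossing (hf.comp continuous_neg) (neg_le_neg hxz)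
    (by simpa using hz) (by simpa using hx)
  refine ⟨-a, ⟨le_neg.2 ha.2, neg_le.1 ha.1⟩, hfa, fun t ht => ?_⟩
  simpa using hge (-t) ⟨le_neg.2 ht.2, neg_le_neg ht.1⟩

theorem Function.Periodic.exists_Icc_crossings {T : ℝ} (hfT : Function.Periodic f T) (hT : 0 < T)
    {z x : ℝ} (hz : f z ≤ s) (hx : s ≤ f x) :
    ∃ a b, x ∈ Icc a b ∧ f a = s ∧ f b = s ∧ ∀ t ∈ Icc a b, s ≤ f t := by
  obtain ⟨z₁, hz₁, hfz₁⟩ := hfT.exists_mem_Ico hT z (x - T)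
  obtain ⟨z₂, hz₂, hfz₂⟩ := hfT.exists_mem_Ico hT z x
  obtain ⟨a, ha, hfa, hge_left⟩ := exists_left_crossing hf (by linarith [hz₁.2]) (hfz₁ ▸ hz) hx
  obtain ⟨b, hb, hfb, hge_right⟩ := exists_right_crossing hf hz₂.1 (hfz₂ ▸ hz) hx
  refine ⟨a, b, ⟨ha.2, hb.1⟩, hfa, hfb, fun t ht => ?_⟩
  rcases le_total t x with htx | hxt
  · exact hge_left t ⟨ht.1, htx⟩
  · exact hge_right t ⟨hxt, ht.2⟩

end Crossing

noncomputable def gardnerNonlinearity (c σ α t : ℝ) : ℝ :=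
  -c * t + (σ / 2) * t ^ 2 + (α / 3) * t ^ 3

noncomputable def gardnerRoot (c σ α : ℝ) : ℝ := √(σ ^ 2 / (4 * α ^ 2) + c / α) - σ / (2 * α)

theorem gardnerNonlinearity_neg (c σ α t : ℝ) :
    gardnerNonlinearity c (-σ) α (-t) = -gardnerNonlinearity c σ α t := by
  simp only [gardnerNonlinearity]
  ring

theorem gardnerRoot_add_gardnerRoot_neg (c σ α : ℝ) :
    gardnerRoot c σ α + gardnerRoot c (-σ) α = 2 * √(σ ^ 2 / (4 * α ^ 2) + c / α) := by
  simp only [gardnerRoot, neg_sq]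
  ring

section Nonlinearity

variable {c σ α : ℝ} (hc : 0 ≤ c) (hα : 0 < α)
include hc hα

theorem gardnerRoot_nonneg : 0 ≤ gardnerRoot c σ α := by
  rw [gardnerRoot, sub_nonneg]
  refine (le_abs_self _).trans (Real.abs_le_sqrt ?_)
  rw [div_pow, mul_pow]
  norm_num
  positivity

theorem strictMonoOn_gardnerNonlinearity :
    StrictMonoOn (gardnerNonlinearity c σ α) (Ici (gardnerRoot c σ α)) := by
  have hderiv : ∀ t, HasDerivAt (gardnerNonlinearity c σ α) (-c + σ * t + α * t ^ 2) t := fun t =>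
    ((((hasDerivAt_id' t).const_mul (-c)).add ((hasDerivAt_pow 2 t).const_mul (σ / 2))).add
      ((hasDerivAt_pow 3 t).const_mul (α / 3))).congr_deriv (by ring)
  refine strictMonoOn_of_deriv_pos (convex_Ici _)
    (fun t _ => (hderiv t).continuousAt.continuousWithinAt) fun t ht => ?_
  rw [interior_Ici, mem_Ioi, gardnerRoot, sub_lt_iff_lt_add] at ht
  set R := √(σ ^ 2 / (4 * α ^ 2) + c / α)
  have hR : R ^ 2 = σ ^ 2 / (4 * α ^ 2) + c / α := Real.sq_sqrt (by positivity)
  have hcompl : -c + σ * t + α * t ^ 2 = α * ((t + σ / (2 * α)) ^ 2 - R ^ 2) := by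
    rw [hR]
    field_simp
    ring
  rw [(hderiv t).deriv, hcompl]
  exact mul_pos hα (sub_pos.2 (pow_lt_pow_left₀ ht (Real.sqrt_nonneg _) two_ne_zero))

end Nonlinearity

theorem le_gardnerRoot {c σ α B : ℝ} (hc : 0 ≤ c) (hα : 0 < α) {φ : ℝ → ℝ}
    (hφc : Continuous φ) (hφp : Function.Periodic φ (2 * π)) (hφ0 : ∫ y in (-π)..π, φ y = 0)
    (heq : ∀ x, gardnerNonlinearity c σ α (φ x) = -Kconv φ x + B) (x : ℝ) :
    φ x ≤ gardnerRoot c σ α := by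
  set p := gardnerRoot c σ α
  have hp : 0 ≤ p := gardnerRoot_nonneg hc hα
  by_contra! hx
  obtain ⟨z, hz⟩ : ∃ z, φ z ≤ 0 := by
    by_contra! hpos
    exact (intervalIntegral.intervalIntegral_pos_of_pos (hφc.intervalIntegrable _ _) hpos
      (neg_lt_self pi_pos)).ne' hφ0
  obtain ⟨a, b, hxab, hfa, hfb, hge⟩ :=
    hφp.exists_Icc_crossings hφc two_pi_pos (hz.trans hp) hx.le
  have hmin := (concaveOn_Kconv hφc hφp hφ0 fun t ht => hp.trans (hge t ht)).min_le_of_mem_Icc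
    (left_mem_Icc.2 (hxab.1.trans hxab.2)) (right_mem_Icc.2 (hxab.1.trans hxab.2)) hxab
  have hK : ∀ t, Kconv φ t = B - gardnerNonlinearity c σ α (φ t) := fun t => by linarith [heq t]
  rw [hK, hK, hK, hfa, hfb, min_self] at hmin
  linarith [strictMonoOn_gardnerNonlinearity hc hα self_mem_Ici hx.le hx]

/-- Amplitude bound for the reduced Gardner–Ostrovsky equation: if `α > 0`, any continuous
periodic zero-mean solution of `−cφ + (σ/2)φ² + (α/3)φ³ = −K∗φ + B` has amplitude at most
`2√(σ²/(4α²) + c/α)`. -/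
theorem amplitude_bound_reduced_GO (c σ α B : ℝ) (hc : 0 < c) (hα : 0 < α)
    (φ : ℝ → ℝ) (hφc : Continuous φ) (hφp : Function.Periodic φ (2 * π))
    (hφ0 : (∫ y in (-π)..π, φ y) = 0)
    (heq : ∀ x, -c * φ x + (σ / 2) * (φ x) ^ 2 + (α / 3) * (φ x) ^ 3 = -(Kconv φ x) + B) :
    ∀ x y, φ x - φ y ≤ 2 * Real.sqrt (σ ^ 2 / (4 * α ^ 2) + c / α) := by
  intro x y
  have hmax := le_gardnerRoot hc.le hα hφc hφp hφ0 heq x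
  have heq_neg : ∀ t, gardnerNonlinearity c (-σ) α ((-φ) t) = -Kconv (-φ) t + -B := fun t => by
    rw [Pi.neg_apply, gardnerNonlinearity_neg, Kconv_neg, gardnerNonlinearity, heq]
    ring
  have hmin := le_gardnerRoot hc.le hα hφc.neg (hφp.comp Neg.neg)
    (by simp only [Pi.neg_apply, intervalIntegral.integral_neg, hφ0, neg_zero]) heq_neg y
  linarith [gardnerRoot_add_gardnerRoot_neg c σ α, Pi.neg_apply φ y]
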